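/- Computation-corruption bound (ν part of the negligible security error lemma): Let N, d, m be natural numbers with d ≤ N, m ≤ N, and let c ∈ [0, 1/2). Let Z₁ be distributed according to the hypergeometric distribution with population N, m marked items, and d draws (the number of attacked computation rounds under a uniformly random partition), and conditionally on Z₁ = z let Z₂ be binomial with d − z trials and success probability c (the unattacked computation rounds that fail due to the inherent BQP error). Then for every real χ with 0 ≤ χ ≤ (1 − 2c)/(2 − 2c) − m/N, the probability that Z₁ + Z₂ > d/2 satisfies Pr[Z₁ + Z₂ > d/2] ≤ exp(−2·χ²·d) + exp(−2·((1 − m/N − χ)·(1 − c) − 1/2)² · d / (1 − m/N − χ)). -/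

import Mathlib

/-!
Split according to whether `Z₁` exceeds `(m/N + χ) d`. The generating function of the
hypergeometric distribution is dominated on `[1, ∞)` by that of `Binomial(d, m/N)`, because its
factorial moments `C(m,k) C(d,k) / C(N,k)` are at most `C(d,k) (m/N)^k`; so Chernoff's method with
Hoeffding's lemma bounds the probability of that event by `exp(-2χ²d)`. Otherwise at least
`(1 - m/N - χ) d` rounds are unattacked, and Hoeffding's bound for the binomial `Z₂` gives the
second term, since `1 - m/N - χ ≥ 1 / (2 - 2c)` makes the threshold `d/2` lie above its mean.
-/

open Finset

/-- The hypergeometric mass function: population `N`, `K` marked items, `n` draws. -/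
noncomputable def hypergeomPMF (N K n j : ℕ) : ℝ :=
  ((K.choose j : ℝ) * ((N - K).choose (n - j) : ℝ)) / (N.choose n : ℝ)

/-- The binomial mass function with `t` trials and success probability `p`. -/
noncomputable def binomPMF (t : ℕ) (p : ℝ) (j : ℕ) : ℝ :=
  (t.choose j : ℝ) * p ^ j * (1 - p) ^ (t - j)

open Real MeasureTheory ProbabilityTheory

namespace Nat

lemma descFactorial_mul_pow_le_descFactorial_mul_pow {m N : ℕ} (h : m ≤ N) (k : ℕ) :
    m.descFactorial k * N ^ k ≤ N.descFactorial k * m ^ k := by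
  induction k with
  | zero => simp
  | succ k ih =>
    have step : (m - k) * N ≤ (N - k) * m := by
      rw [Nat.sub_mul, Nat.sub_mul, mul_comm N m]
      exact Nat.sub_le_sub_left (Nat.mul_le_mul_left k h) _
    calc m.descFactorial (k + 1) * N ^ (k + 1)
        = ((m - k) * N) * (m.descFactorial k * N ^ k) := by rw [descFactorial_succ, pow_succ]; ring
      _ ≤ ((N - k) * m) * (N.descFactorial k * m ^ k) := Nat.mul_le_mul step ih
      _ = N.descFactorial (k + 1) * m ^ (k + 1) := by rw [descFactorial_succ, pow_succ]; ring

lemma choose_mul_pow_le_choose_mul_pow {m N : ℕ} (h : m ≤ N) (k : ℕ) :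
    m.choose k * N ^ k ≤ N.choose k * m ^ k := by
  have := descFactorial_mul_pow_le_descFactorial_mul_pow h k
  rw [descFactorial_eq_factorial_mul_choose, descFactorial_eq_factorial_mul_choose,
    mul_assoc, mul_assoc] at this
  exact Nat.le_of_mul_le_mul_left this (factorial_pos k)

/-- The unnormalised `k`-th factorial moment of the hypergeometric distribution. -/
lemma sum_choose_mul_choose_mul_choose {N m d k : ℕ} (hm : m ≤ N) (hk : k ≤ d) :
    ∑ j ∈ range (d + 1), m.choose j * (N - m).choose (d - j) * j.choose k
      = m.choose k * (N - k).choose (d - k) := by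
  rw [range_eq_Ico, ← sum_Ico_consecutive _ (Nat.zero_le k) (by omega),
    sum_eq_zero fun j hj => by rw [choose_eq_zero_of_lt (mem_Ico.mp hj).2, mul_zero],
    zero_add, sum_Ico_eq_sum_range, show d + 1 - k = d - k + 1 by omega]
  have hterm : ∀ i ∈ range (d - k + 1),
      m.choose (k + i) * (N - m).choose (d - (k + i)) * (k + i).choose k
        = m.choose k * ((m - k).choose i * (N - m).choose (d - k - i)) := fun i _ => by
    rw [mul_right_comm, choose_mul (Nat.le_add_right k i), Nat.add_sub_cancel_left,
      show d - (k + i) = d - k - i by omega]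
    ring
  rw [sum_congr rfl hterm, ← mul_sum, ← Finset.Nat.sum_antidiagonal_eq_sum_range_succ
    (fun i j => (m - k).choose i * (N - m).choose j), ← add_choose_eq]
  rcases le_or_gt k m with hkm | hmk
  · rw [show m - k + (N - m) = N - k by omega]
  · rw [choose_eq_zero_of_lt hmk, zero_mul, zero_mul]

end Nat

lemma hypergeomPMF_nonneg (N K n j : ℕ) : 0 ≤ hypergeomPMF N K n j := by
  unfold hypergeomPMF; positivity

lemma sum_hypergeomPMF_mul_choose {N m d k : ℕ} (hd : d ≤ N) (hm : m ≤ N) (hk : k ≤ d) :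
    ∑ j ∈ range (d + 1), hypergeomPMF N m d j * j.choose k
      = m.choose k * d.choose k / N.choose k := by
  have hNd : (N.choose d : ℝ) ≠ 0 := by exact_mod_cast (Nat.choose_pos hd).ne'
  have hNk : (N.choose k : ℝ) ≠ 0 := by exact_mod_cast (Nat.choose_pos (hk.trans hd)).ne'
  have hmoment : ∑ j ∈ range (d + 1),
      (m.choose j : ℝ) * (N - m).choose (d - j) * j.choose k
        = m.choose k * (N - k).choose (d - k) := by
    exact_mod_cast Nat.sum_choose_mul_choose_mul_choose hm hk
  have hpascal : (N.choose d : ℝ) * d.choose k = N.choose k * (N - k).choose (d - k) := by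
    exact_mod_cast Nat.choose_mul hk
  simp only [hypergeomPMF, div_mul_eq_mul_div, ← sum_div, hmoment]
  rw [div_eq_div_iff hNd hNk]
  linear_combination (-(m.choose k : ℝ)) * hpascal

lemma sum_hypergeomPMF {N m d : ℕ} (hd : d ≤ N) (hm : m ≤ N) :
    ∑ j ∈ range (d + 1), hypergeomPMF N m d j = 1 := by
  simpa using sum_hypergeomPMF_mul_choose hd hm (Nat.zero_le d)

lemma choose_div_choose_le_div_pow {m N k : ℕ} (hm : m ≤ N) (hk : k ≤ N) :
    (m.choose k : ℝ) / N.choose k ≤ ((m : ℝ) / N) ^ k := by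
  rcases N.eq_zero_or_pos with rfl | hN
  · obtain rfl : k = 0 := Nat.le_zero.mp hk
    simp
  rw [div_pow, div_le_div_iff₀ (by exact_mod_cast Nat.choose_pos hk) (by positivity)]
  rw [mul_comm ((m : ℝ) ^ k)]
  exact_mod_cast Nat.choose_mul_pow_le_choose_mul_pow hm k

lemma pow_eq_sum_choose_mul_sub_one_pow {j d : ℕ} (hj : j ≤ d) (x : ℝ) :
    x ^ j = ∑ k ∈ range (d + 1), j.choose k * (x - 1) ^ k := by
  rw [← sum_subset (range_subset_range.mpr (by omega : j + 1 ≤ d + 1)) fun k _ hk => by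
    rw [Nat.choose_eq_zero_of_lt (by simpa using hk), Nat.cast_zero, zero_mul]]
  conv_lhs => rw [← sub_add_cancel x 1, add_pow]
  simp only [one_pow, one_mul, mul_comm]

lemma sum_hypergeomPMF_mul_pow_le {N m d : ℕ} (hd : d ≤ N) (hm : m ≤ N) {x : ℝ} (hx : 1 ≤ x) :
    ∑ j ∈ range (d + 1), hypergeomPMF N m d j * x ^ j
      ≤ (1 - (m : ℝ) / N + (m : ℝ) / N * x) ^ d := by
  calc ∑ j ∈ range (d + 1), hypergeomPMF N m d j * x ^ j
      = ∑ k ∈ range (d + 1),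
          (∑ j ∈ range (d + 1), hypergeomPMF N m d j * j.choose k) * (x - 1) ^ k := by
        simp only [sum_mul, mul_assoc]
        rw [sum_comm]
        refine sum_congr rfl fun j hj => ?_
        rw [pow_eq_sum_choose_mul_sub_one_pow (Nat.lt_succ_iff.mp (mem_range.mp hj)), mul_sum]
    _ ≤ ∑ k ∈ range (d + 1), d.choose k * ((m : ℝ) / N) ^ k * (x - 1) ^ k := by
        gcongr with k hk
        have hkd := Nat.lt_succ_iff.mp (mem_range.mp hk)
        rw [sum_hypergeomPMF_mul_choose hd hm hkd, mul_div_right_comm, mul_comm]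
        gcongr
        exact choose_div_choose_le_div_pow hm (hkd.trans hd)
    _ = (1 - (m : ℝ) / N + (m : ℝ) / N * x) ^ d := by
        rw [show 1 - (m : ℝ) / N + m / N * x = m / N * (x - 1) + 1 by ring, add_pow]
        simp only [one_pow, mul_one, mul_pow]
        exact sum_congr rfl fun k _ => by ring

lemma binomPMF_nonneg (t : ℕ) {p : ℝ} (hp0 : 0 ≤ p) (hp1 : p ≤ 1) (j : ℕ) :
    0 ≤ binomPMF t p j := by
  have : 0 ≤ 1 - p := by linarith
  unfold binomPMF; positivity

lemma sum_binomPMF_mul_pow (t : ℕ) (p x : ℝ) :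
    ∑ j ∈ range (t + 1), binomPMF t p j * x ^ j = (1 - p + p * x) ^ t := by
  rw [add_comm (1 - p), add_pow]
  exact sum_congr rfl fun j _ => by unfold binomPMF; ring

lemma sum_binomPMF (t : ℕ) (p : ℝ) : ∑ j ∈ range (t + 1), binomPMF t p j = 1 := by
  simpa using sum_binomPMF_mul_pow t p 1

/-- Hoeffding's lemma for a Bernoulli variable. -/
lemma one_sub_add_mul_exp_le {p : ℝ} (hp0 : 0 ≤ p) (hp1 : p ≤ 1) (t : ℝ) :
    1 - p + p * exp t ≤ exp (t * p + t ^ 2 / 8) := by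
  let X : Bool → ℝ := fun b => if b then 1 else 0
  have hoeffding := (hasSubgaussianMGF_of_mem_Icc (μ := Ber(true, false, ⟨p, hp0, hp1⟩))
    (X := X) (a := 0) (b := 1) (by fun_prop)
    (ae_of_all _ fun b => by cases b <;> simp [X])).mgf_le t
  simp only [mgf, integral_bernoulliMeasure, X] at hoeffding
  norm_num at hoeffding
  calc 1 - p + p * exp t = exp (t * p) * (p * exp (t * (1 - p)) + (1 - p) * exp (-(t * p))) := by
        simp only [mul_add, mul_left_comm (exp (t * p)), ← exp_add]
        ring_nf; rw [exp_zero]; ring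
    _ ≤ exp (t * p) * exp (t ^ 2 / 8) := by gcongr; exact hoeffding.trans_eq (by ring_nf)
    _ = exp (t * p + t ^ 2 / 8) := (exp_add _ _).symm

/-- Chernoff's method at the optimal exponent `t = 4 (s - p n) / n`, with Hoeffding's lemma
bounding the binomial generating function. -/
lemma sum_ite_lt_le_exp_of_sum_mul_pow_le {n : ℕ} {p s : ℝ} {w : ℕ → ℝ} (hp0 : 0 ≤ p)
    (hp1 : p ≤ 1) (hw : ∀ j ∈ range (n + 1), 0 ≤ w j)
    (hgen : ∀ x : ℝ, 1 ≤ x → ∑ j ∈ range (n + 1), w j * x ^ j ≤ (1 - p + p * x) ^ n)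
    (hs : p * n ≤ s) :
    ∑ j ∈ range (n + 1), (if s < j then w j else 0) ≤ exp (-2 * (s - p * n) ^ 2 / n) := by
  set t := 4 * (s - p * n) / n
  have ht : 0 ≤ t := div_nonneg (by linarith) n.cast_nonneg
  calc ∑ j ∈ range (n + 1), (if s < j then w j else 0)
      ≤ ∑ j ∈ range (n + 1), w j * exp (t * (j - s)) := sum_le_sum fun j hj => by
        split_ifs with h
        · exact le_mul_of_one_le_right (hw j hj) (one_le_exp (mul_nonneg ht (by linarith)))
        · exact mul_nonneg (hw j hj) (exp_nonneg _)
    _ = exp (-(t * s)) * ∑ j ∈ range (n + 1), w j * exp t ^ j := by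
        rw [mul_sum]
        refine sum_congr rfl fun j _ => ?_
        rw [← exp_nat_mul, mul_left_comm, ← exp_add]
        ring_nf
    _ ≤ exp (-(t * s)) * (1 - p + p * exp t) ^ n := by gcongr; exact hgen _ (one_le_exp ht)
    _ ≤ exp (-(t * s)) * exp (t * p + t ^ 2 / 8) ^ n := by
        gcongr
        exact one_sub_add_mul_exp_le hp0 hp1 t
    _ = exp (-2 * (s - p * n) ^ 2 / n) := by
        rw [← exp_nat_mul, ← exp_add]
        congr 1
        rcases n.eq_zero_or_pos with rfl | hn
        · simp [t]
        · simp only [t]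
          field_simp
          ring

lemma sum_hypergeomPMF_tail_le {N m d : ℕ} (hd : d ≤ N) (hm : m ≤ N) {χ : ℝ} (hχ : 0 ≤ χ) :
    ∑ j ∈ range (d + 1), (if ((m : ℝ) / N + χ) * d < j then hypergeomPMF N m d j else 0)
      ≤ exp (-2 * χ ^ 2 * d) := by
  have hp1 : (m : ℝ) / N ≤ 1 := div_le_one_of_le₀ (by exact_mod_cast hm) N.cast_nonneg
  refine (sum_ite_lt_le_exp_of_sum_mul_pow_le (by positivity) hp1
    (fun j _ => hypergeomPMF_nonneg N m d j) (fun x hx => sum_hypergeomPMF_mul_pow_le hd hm hx)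
    (by nlinarith [d.cast_nonneg (α := ℝ)])).trans_eq ?_
  rcases d.eq_zero_or_pos with rfl | hd0
  · simp
  · field_simp
    ring_nf

lemma sum_binomPMF_tail_le (n : ℕ) {p s : ℝ} (hp0 : 0 ≤ p) (hp1 : p ≤ 1) (hs : p * n ≤ s) :
    ∑ j ∈ range (n + 1), (if s < j then binomPMF n p j else 0) ≤ exp (-2 * (s - p * n) ^ 2 / n) :=
  sum_ite_lt_le_exp_of_sum_mul_pow_le hp0 hp1 (fun j _ => binomPMF_nonneg n hp0 hp1 j)
    (fun x _ => (sum_binomPMF_mul_pow n p x).le) hs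

lemma mul_sub_sq_div_le_mul_sub_sq_div {q D ν n : ℝ} (hD : 0 ≤ D) (hν : 0 < ν) (hνn : ν ≤ n)
    (hνD : D ≤ ν * q) : (ν * q - D) ^ 2 / ν ≤ (n * q - D) ^ 2 / n := by
  have hq : 0 ≤ q := nonneg_of_mul_nonneg_right (hD.trans hνD) hν
  have hD2 : D ^ 2 ≤ n * ν * q ^ 2 := by
    nlinarith [mul_le_mul_of_nonneg_right hνn (mul_nonneg hν.le (sq_nonneg q))]
  rw [div_le_div_iff₀ hν (hν.trans_le hνn)]
  nlinarith [mul_nonneg (sub_nonneg.mpr hνn) (sub_nonneg.mpr hD2)]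

/-- Given `Z₁ = z ≤ (1 - a) d`, at least `a d` rounds are unattacked, and `(n (1 - c) - d/2)² / n`
increases with their number `n`. -/
lemma sum_binomPMF_corruption_le {d z : ℕ} {a c : ℝ} (hc0 : 0 ≤ c) (hc1 : c ≤ 1) (hd : 0 < d)
    (ha : 0 < a) (hz : (z : ℝ) ≤ (1 - a) * d) (hac : 1 / 2 ≤ a * (1 - c)) :
    ∑ j ∈ range (d - z + 1), (if (d : ℝ) / 2 < z + j then binomPMF (d - z) c j else 0)
      ≤ exp (-2 * (a * (1 - c) - 1 / 2) ^ 2 * d / a) := by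
  have hdR : (0 : ℝ) < d := by exact_mod_cast hd
  have hzd : z ≤ d := Nat.cast_le.mp (hz.trans (by nlinarith) : (z : ℝ) ≤ d)
  have hn : ((d - z : ℕ) : ℝ) = d - z := Nat.cast_sub hzd
  have hrate : (a * (1 - c) - 1 / 2) ^ 2 * d / a ≤ ((d : ℝ) / 2 - z - c * (d - z)) ^ 2 / (d - z) :=
    calc (a * (1 - c) - 1 / 2) ^ 2 * d / a = (a * d * (1 - c) - d / 2) ^ 2 / (a * d) := by
          field_simp
      _ ≤ ((d - z) * (1 - c) - d / 2) ^ 2 / (d - z) :=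
          mul_sub_sq_div_le_mul_sub_sq_div (by positivity) (mul_pos ha hdR) (by linarith)
            (by nlinarith)
      _ = ((d : ℝ) / 2 - z - c * (d - z)) ^ 2 / (d - z) := by ring
  calc ∑ j ∈ range (d - z + 1), (if (d : ℝ) / 2 < z + j then binomPMF (d - z) c j else 0)
      = ∑ j ∈ range (d - z + 1), (if (d : ℝ) / 2 - z < j then binomPMF (d - z) c j else 0) := by
        simp only [sub_lt_iff_lt_add']
    _ ≤ exp (-2 * ((d : ℝ) / 2 - z - c * (d - z : ℕ)) ^ 2 / (d - z : ℕ)) :=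
        sum_binomPMF_tail_le _ hc0 hc1 (by rw [hn]; nlinarith)
    _ ≤ exp (-2 * (a * (1 - c) - 1 / 2) ^ 2 * d / a) := by
        rw [hn, exp_le_exp]
        linear_combination 2 * hrate

lemma sum_ite_binomPMF_le_one (t : ℕ) {p : ℝ} (hp0 : 0 ≤ p) (hp1 : p ≤ 1) (P : ℕ → Prop)
    [DecidablePred P] : ∑ j ∈ range (t + 1), (if P j then binomPMF t p j else 0) ≤ 1 := by
  rw [← sum_filter, ← sum_binomPMF t p]
  exact sum_le_sum_of_subset_of_nonneg (filter_subset _ _) fun j _ _ => binomPMF_nonneg t hp0 hp1 j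

lemma sum_mul_le_sum_ite_add_sum_mul {ι : Type*} {s : Finset ι} {w f : ι → ℝ} {P : ι → Prop}
    [DecidablePred P] {B : ℝ} (hw : ∀ i ∈ s, 0 ≤ w i) (hf : ∀ i ∈ s, f i ≤ 1)
    (hfB : ∀ i ∈ s, ¬P i → f i ≤ B) (hB : 0 ≤ B) :
    ∑ i ∈ s, w i * f i ≤ ∑ i ∈ s, (if P i then w i else 0) + (∑ i ∈ s, w i) * B := by
  rw [sum_mul, ← sum_add_distrib]
  refine sum_le_sum fun i hi => ?_
  split_ifs with h
  · nlinarith [hw i hi, hf i hi]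
  · nlinarith [hw i hi, hfB i hi h]

theorem computation_corruption_bound (N d m : ℕ) (hd : d ≤ N) (hm : m ≤ N)
    (c : ℝ) (hc0 : 0 ≤ c) (hc1 : c < 1 / 2)
    (χ : ℝ) (hχ0 : 0 ≤ χ)
    (hχ1 : χ ≤ (1 - 2 * c) / (2 - 2 * c) - (m : ℝ) / N) :
    (∑ z₁ ∈ Finset.range (d + 1), ∑ z₂ ∈ Finset.range (d - z₁ + 1),
        if (d : ℝ) / 2 < (z₁ : ℝ) + (z₂ : ℝ) then
          hypergeomPMF N m d z₁ * binomPMF (d - z₁) c z₂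
        else 0)
      ≤ Real.exp (-2 * χ ^ 2 * d)
        + Real.exp (-2 * ((1 - (m : ℝ) / N - χ) * (1 - c) - 1 / 2) ^ 2 * d
            / (1 - (m : ℝ) / N - χ)) := by
  rcases d.eq_zero_or_pos with rfl | hd0
  · norm_num
  set a := 1 - (m : ℝ) / N - χ
  have hc : 0 < 1 - c := by linarith
  have hac : 1 / 2 ≤ a * (1 - c) := by
    have ha : 1 / (2 * (1 - c)) ≤ a := by
      rw [show (1 - 2 * c) / (2 - 2 * c) = 1 - 1 / (2 * (1 - c)) by field_simp; ring] at hχ1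
      linarith
    calc 1 / 2 = 1 / (2 * (1 - c)) * (1 - c) := by field_simp
      _ ≤ a * (1 - c) := by gcongr
  have ha : 0 < a := pos_of_mul_pos_left (by linarith) hc.le
  calc _ = ∑ z₁ ∈ range (d + 1), hypergeomPMF N m d z₁ * ∑ z₂ ∈ range (d - z₁ + 1),
        (if (d : ℝ) / 2 < z₁ + z₂ then binomPMF (d - z₁) c z₂ else 0) := by
        simp only [mul_sum, mul_ite, mul_zero]
    _ ≤ ∑ z₁ ∈ range (d + 1), (if ((m : ℝ) / N + χ) * d < z₁ then hypergeomPMF N m d z₁ else 0)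
        + (∑ z₁ ∈ range (d + 1), hypergeomPMF N m d z₁)
          * exp (-2 * (a * (1 - c) - 1 / 2) ^ 2 * d / a) :=
        sum_mul_le_sum_ite_add_sum_mul (fun z₁ _ => hypergeomPMF_nonneg N m d z₁)
          (fun z₁ _ => sum_ite_binomPMF_le_one _ hc0 (by linarith) _)
          (fun z₁ _ hz₁ => sum_binomPMF_corruption_le hc0 (by linarith) hd0 ha (by linarith) hac)
          (exp_nonneg _)
    _ ≤ _ := by
        rw [sum_hypergeomPMF hd hm, one_mul]
        gcongr
        exact sum_hypergeomPMF_tail_le hd hm hχ0
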